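/- arXiv:2304.10573 — 5 statements merged into one kernel-verified Lean document; each statement's English description precedes it below -/
import Mathlib

section
/- Let f : ℝ → ℝ be differentiable and convex with f'(0) = 0, and let μ be a probability mass function over a finite action set A with μ(a) > 0 for all a. Let Q : A → ℝ and suppose V* minimizes V ↦ ∑_a μ(a) · f(Q(a) − V). If Q(a) ≠ V* for all a, define w(a) = |f'(Q(a) − V*)| / |Q(a) − V*| and π(a) = μ(a)·w(a) / Z where Z = ∑_b μ(b)·w(b) (assume Z > 0). Then V* also minimizes V ↦ ∑_a π(a) · (Q(a) − V)². -/
/-!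
Since `f` is convex with `f' 0 = 0`, `f' x` has the sign of `x`, so `|f' x| / |x| * x = f' x`.
Hence `π a * (Q a - V*)` is `μ a * f' (Q a - V*) / Z`, and the first-order condition
`∑ μ a * f' (Q a - V*) = 0` of the minimisation defining `V*` becomes the first-order condition
`∑ π a * (Q a - V*) = 0` of the weighted least-squares problem, which is convex since `π ≥ 0`.
-/

open Finset

lemma abs_div_abs_mul_self_of_monotone {g : ℝ → ℝ} (hg : Monotone g) (hg0 : g 0 = 0) (x : ℝ) :
    |g x| / |x| * x = g x := by
  rcases lt_trichotomy x 0 with hx | rfl | hx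
  · have hgx : g x ≤ 0 := hg0 ▸ hg hx.le
    rw [abs_of_nonpos hgx, abs_of_neg hx]
    field_simp [hx.ne]
  · simp [hg0]
  · have hgx : 0 ≤ g x := hg0 ▸ hg hx.le
    rw [abs_of_nonneg hgx, abs_of_pos hx]
    field_simp [hx.ne']

lemma sum_mul_deriv_sub_eq_zero_of_isMinOn {ι : Type*} (s : Finset ι) {f : ℝ → ℝ}
    (hf : Differentiable ℝ f) (μ Q : ι → ℝ) {c : ℝ}
    (hc : IsMinOn (fun V => ∑ i ∈ s, μ i * f (Q i - V)) Set.univ c) :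
    ∑ i ∈ s, μ i * deriv f (Q i - c) = 0 := by
  have hderiv : HasDerivAt (fun V => ∑ i ∈ s, μ i * f (Q i - V))
      (∑ i ∈ s, μ i * (deriv f (Q i - c) * -1)) c :=
    HasDerivAt.fun_sum fun i _ =>
      ((hf _).hasDerivAt.comp c ((hasDerivAt_id c).const_sub (Q i))).const_mul (μ i)
  have h := (hc.isLocalMin Filter.univ_mem).hasDerivAt_eq_zero hderiv
  simpa only [mul_neg_one, mul_neg, mul_one, sum_neg_distrib, neg_eq_zero] using h

lemma sum_mul_sub_sq_le_of_sum_mul_sub_eq_zero {ι : Type*} (s : Finset ι) {p q : ι → ℝ} {c : ℝ}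
    (hp : ∀ i ∈ s, 0 ≤ p i) (hc : ∑ i ∈ s, p i * (q i - c) = 0) (V : ℝ) :
    ∑ i ∈ s, p i * (q i - c) ^ 2 ≤ ∑ i ∈ s, p i * (q i - V) ^ 2 := by
  have hsplit : ∑ i ∈ s, p i * (q i - V) ^ 2 = ∑ i ∈ s, p i * (q i - c) ^ 2
      + 2 * (c - V) * ∑ i ∈ s, p i * (q i - c) + ∑ i ∈ s, p i * (c - V) ^ 2 := by
    rw [mul_sum, ← sum_add_distrib, ← sum_add_distrib]
    exact sum_congr rfl fun i _ => by ring
  have hrest : 0 ≤ ∑ i ∈ s, p i * (c - V) ^ 2 :=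
    sum_nonneg fun i hi => mul_nonneg (hp i hi) (sq_nonneg _)
  rw [hsplit, hc]
  linarith

theorem stmt_0_general {A : Type*} [Fintype A]
    (f : ℝ → ℝ) (hdiff : Differentiable ℝ f) (hconv : ConvexOn ℝ Set.univ f)
    (hf0 : deriv f 0 = 0)
    (μ Q : A → ℝ) (hμpos : ∀ a, 0 < μ a)
    (Vstar : ℝ)
    (hmin : ∀ V : ℝ, ∑ a, μ a * f (Q a - Vstar) ≤ ∑ a, μ a * f (Q a - V))
    (w : A → ℝ) (hw : ∀ a, w a = |deriv f (Q a - Vstar)| / |Q a - Vstar|)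
    (Z : ℝ) (hZ : Z = ∑ a, μ a * w a)
    (π : A → ℝ) (hπ : ∀ a, π a = μ a * w a / Z) :
    ∀ V : ℝ, ∑ a, π a * (Q a - Vstar) ^ 2 ≤ ∑ a, π a * (Q a - V) ^ 2 := by
  have hmono : Monotone (deriv f) :=
    monotoneOn_univ.mp (hconv.monotoneOn_deriv fun x _ => hdiff x)
  have hfoc : ∑ a, μ a * deriv f (Q a - Vstar) = 0 :=
    sum_mul_deriv_sub_eq_zero_of_isMinOn univ hdiff μ Q fun V _ => hmin V
  have hw_nonneg (a : A) : 0 ≤ w a := hw a ▸ div_nonneg (abs_nonneg _) (abs_nonneg _)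
  have hZ_nonneg : 0 ≤ Z := hZ ▸ sum_nonneg fun a _ => mul_nonneg (hμpos a).le (hw_nonneg a)
  have hπ_nonneg (a : A) : 0 ≤ π a :=
    hπ a ▸ div_nonneg (mul_nonneg (hμpos a).le (hw_nonneg a)) hZ_nonneg
  have hπ_foc : ∑ a, π a * (Q a - Vstar) = 0 := by
    have hterm (a : A) : π a * (Q a - Vstar) = μ a * deriv f (Q a - Vstar) / Z := by
      conv_rhs => rw [← abs_div_abs_mul_self_of_monotone hmono hf0 (Q a - Vstar)]
      rw [hπ, hw]
      ring
    rw [sum_congr rfl fun a _ => hterm a, ← sum_div, hfoc, zero_div]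
  exact sum_mul_sub_sq_le_of_sum_mul_sub_eq_zero univ (fun a _ => hπ_nonneg a) hπ_foc

theorem stmt_0 {A : Type*} [Fintype A]
    (f : ℝ → ℝ) (hdiff : Differentiable ℝ f) (hconv : ConvexOn ℝ Set.univ f)
    (hf0 : deriv f 0 = 0)
    (μ Q : A → ℝ) (hμpos : ∀ a, 0 < μ a) (hμsum : ∑ a, μ a = 1)
    (Vstar : ℝ)
    (hmin : ∀ V : ℝ, ∑ a, μ a * f (Q a - Vstar) ≤ ∑ a, μ a * f (Q a - V))
    (hQ : ∀ a, Q a ≠ Vstar)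
    (w : A → ℝ) (hw : ∀ a, w a = |deriv f (Q a - Vstar)| / |Q a - Vstar|)
    (Z : ℝ) (hZ : Z = ∑ a, μ a * w a) (hZpos : 0 < Z)
    (π : A → ℝ) (hπ : ∀ a, π a = μ a * w a / Z) :
    ∀ V : ℝ, ∑ a, π a * (Q a - Vstar) ^ 2 ≤ ∑ a, π a * (Q a - V) ^ 2 :=
  stmt_0_general f hdiff hconv hf0 μ Q hμpos Vstar hmin w hw Z hZ π hπ
end

section
/- Fix α > 0, a finite action set A, a probability mass function μ with μ(a) > 0 for all a, and Q : A → ℝ. The function V ↦ ∑_a μ(a) · (exp(α(Q(a) − V)) − α(Q(a) − V)) attains its unique minimum at V* = (1/α) · log ∑_a exp(α·Q(a) + log μ(a)). -/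
/-!
With `S = ∑ a, μ a * exp (α * Q a)` the objective at `V` is `S * exp (-α V) + α V` minus a
constant, and `exp (α V*) = S`. Hence it exceeds its value at `V*` by `exp x - 1 - x` with
`x = α (V* - V)`, which is positive unless `x = 0`.
-/

open Real Finset

lemma sum_mul_exp_sub_sub_mul_sub_eq {ι : Type*} [Fintype ι] (w q : ι → ℝ)
    (hw : ∑ i, w i = 1) (α V : ℝ) :
    ∑ i, w i * (exp (α * (q i - V)) - α * (q i - V)) =
      (∑ i, w i * exp (α * q i)) * exp (-(α * V)) + α * V - α * ∑ i, w i * q i := by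
  have hsplit : ∀ i, exp (α * (q i - V)) = exp (α * q i) * exp (-(α * V)) := fun i => by
    rw [← exp_add, mul_sub, sub_eq_add_neg]
  simp only [hsplit, mul_sub (w _), sum_sub_distrib, mul_left_comm (w _) α, ← mul_assoc,
    ← sum_mul, ← mul_sum, hw]
  ring

lemma sum_exp_mul_add_log_eq {ι : Type*} [Fintype ι] (w q : ι → ℝ) (hw : ∀ i, 0 < w i)
    (α : ℝ) : ∑ i, exp (α * q i + log (w i)) = ∑ i, w i * exp (α * q i) := by
  refine sum_congr rfl fun i _ => ?_
  rw [exp_add, exp_log (hw i), mul_comm]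

lemma one_add_mul_lt_exp_mul_sub_add_mul {α W V : ℝ} (hα : α ≠ 0) (hV : V ≠ W) :
    1 + α * W < exp (α * W - α * V) + α * V := by
  have hx : α * W - α * V ≠ 0 := by
    rw [← mul_sub]; exact mul_ne_zero hα (sub_ne_zero.mpr hV.symm)
  linarith [add_one_lt_exp hx]

theorem stmt_2_general {A : Type*} [Fintype A]
    (α : ℝ) (hα : 0 < α)
    (μ Q : A → ℝ) (hμpos : ∀ a, 0 < μ a) (hμsum : ∑ a, μ a = 1)
    (Vstar : ℝ)
    (hV : Vstar = (1 / α) * Real.log (∑ a, Real.exp (α * Q a + Real.log (μ a)))) :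
    ∀ V : ℝ, V ≠ Vstar →
      ∑ a, μ a * (Real.exp (α * (Q a - Vstar)) - α * (Q a - Vstar)) <
      ∑ a, μ a * (Real.exp (α * (Q a - V)) - α * (Q a - V)) := by
  intro V hne
  rw [sum_exp_mul_add_log_eq μ Q hμpos] at hV
  have hnonempty : (univ : Finset A).Nonempty :=
    nonempty_of_sum_ne_zero (hμsum ▸ one_ne_zero)
  have hSpos : 0 < ∑ a, μ a * exp (α * Q a) :=
    sum_pos (fun a _ => mul_pos (hμpos a) (exp_pos _)) hnonempty
  have hexpV : exp (α * Vstar) = ∑ a, μ a * exp (α * Q a) := by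
    rw [hV, ← mul_assoc, mul_one_div_cancel hα.ne', one_mul, exp_log hSpos]
  rw [sum_mul_exp_sub_sub_mul_sub_eq μ Q hμsum, sum_mul_exp_sub_sub_mul_sub_eq μ Q hμsum,
    ← hexpV, ← exp_add, ← exp_add, add_neg_cancel, exp_zero, ← sub_eq_add_neg]
  linarith [one_add_mul_lt_exp_mul_sub_add_mul hα.ne' hne]

theorem stmt_2 {A : Type*} [Fintype A] [Nonempty A]
    (α : ℝ) (hα : 0 < α)
    (μ Q : A → ℝ) (hμpos : ∀ a, 0 < μ a) (hμsum : ∑ a, μ a = 1)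
    (Vstar : ℝ)
    (hV : Vstar = (1 / α) * Real.log (∑ a, Real.exp (α * Q a + Real.log (μ a)))) :
    ∀ V : ℝ, V ≠ Vstar →
      ∑ a, μ a * (Real.exp (α * (Q a - Vstar)) - α * (Q a - Vstar)) <
      ∑ a, μ a * (Real.exp (α * (Q a - V)) - α * (Q a - V)) :=
  stmt_2_general α hα μ Q hμpos hμsum Vstar hV
end

section
/- Fix a finite action set A, a probability mass function μ with μ(a) > 0 for all a, and Q : A → ℝ. As τ → 1⁻, the τ-expectile V_τ of Q under μ (the minimizer of V ↦ ∑_a μ(a)·|τ − 𝟙(Q(a)<V)|·(Q(a)−V)²) converges to max_a Q(a). Moreover V_τ is monotonically nondecreasing in τ and V_{1/2} = ∑_a μ(a)·Q(a). -/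
/-!
For `τ, σ ∈ [0, 1]` the expectile loss is affine in the level:
`L_τ(W) = L_σ(W) + (τ - σ) G(W)` with `G(W) = ∑ μ a (Q a - W) |Q a - W|` strictly decreasing in `W`.
Adding the minimality inequalities of `V τ₁` and `V τ₂` therefore gives `G (V τ₂) ≤ G (V τ₁)`,
i.e. `V τ₁ ≤ V τ₂`. Above `M = max Q` the loss is `(1 - τ) ∑ μ a (Q a - W)²`, increasing in `W`,
so `V τ ≤ M`; then the term of a maximizer `a₀` alone gives
`τ μ a₀ (M - V τ)² ≤ L_τ(V τ) ≤ L_τ(M) = (1 - τ) ∑ μ a (Q a - M)²`, which forces `V τ → M`.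
At `τ = 1/2` the loss is half the mean squared error, whose minimizer is the mean.
-/

open Finset Filter Topology

lemma strictMono_mul_abs_self : StrictMono fun x : ℝ => x * |x| := by
  intro x y hxy
  rcases le_total 0 x with hx | hx <;> rcases le_total 0 y with hy | hy <;>
    simp only [abs_of_nonneg, abs_of_nonpos, hx, hy] <;>
    nlinarith [sq_pos_of_pos (sub_pos.2 hxy)]

lemma abs_sub_ite_one_zero {τ : ℝ} (h₀ : 0 ≤ τ) (h₁ : τ ≤ 1) (p : Prop) [Decidable p] :
    |τ - if p then 1 else 0| = if p then 1 - τ else τ := by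
  split_ifs
  · rw [abs_of_nonpos (by linarith)]; ring
  · rw [sub_zero, abs_of_nonneg h₀]

noncomputable section Expectile

variable {A : Type*} [Fintype A] (μ Q : A → ℝ)

def expectileLoss (τ W : ℝ) : ℝ :=
  ∑ a, μ a * (|τ - if Q a < W then 1 else 0| * (Q a - W) ^ 2)

def signedSqDeviation (W : ℝ) : ℝ :=
  ∑ a, μ a * ((Q a - W) * |Q a - W|)

variable {μ Q}

lemma signedSqDeviation_strictAnti [Nonempty A] (hμ : ∀ a, 0 < μ a) :
    StrictAnti (signedSqDeviation μ Q) := fun W₁ W₂ hW =>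
  sum_lt_sum_of_nonempty univ_nonempty fun a _ =>
    mul_lt_mul_of_pos_left (strictMono_mul_abs_self (by linarith)) (hμ a)

lemma expectileLoss_eq_add_mul {τ σ : ℝ} (hτ : τ ∈ Set.Icc (0 : ℝ) 1) (hσ : σ ∈ Set.Icc (0 : ℝ) 1)
    (W : ℝ) :
    expectileLoss μ Q τ W = expectileLoss μ Q σ W + (τ - σ) * signedSqDeviation μ Q W := by
  rw [expectileLoss, expectileLoss, signedSqDeviation, mul_sum, ← sum_add_distrib]
  refine sum_congr rfl fun a _ => ?_
  rw [abs_sub_ite_one_zero hτ.1 hτ.2, abs_sub_ite_one_zero hσ.1 hσ.2]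
  split_ifs with h
  · rw [abs_of_neg (sub_neg.2 h)]; ring
  · rw [abs_of_nonneg (sub_nonneg.2 (not_lt.1 h))]; ring

lemma expectileLoss_of_forall_le {τ W : ℝ} (hτ : τ ≤ 1) (hW : ∀ a, Q a ≤ W) :
    expectileLoss μ Q τ W = (1 - τ) * ∑ a, μ a * (Q a - W) ^ 2 := by
  rw [expectileLoss, mul_sum]
  refine sum_congr rfl fun a _ => ?_
  rcases (hW a).lt_or_eq with h | h
  · rw [if_pos h, abs_of_nonpos (by linarith)]; ring
  · simp [h]

lemma expectileLoss_half (W : ℝ) :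
    expectileLoss μ Q (1 / 2) W = 1 / 2 * ∑ a, μ a * (Q a - W) ^ 2 := by
  rw [expectileLoss, mul_sum]
  refine sum_congr rfl fun a _ => ?_
  rw [abs_sub_ite_one_zero (by norm_num) (by norm_num)]
  split_ifs <;> ring

lemma mul_sq_le_expectileLoss {τ W : ℝ} (hμ : ∀ a, 0 ≤ μ a) (hτ : τ ∈ Set.Icc (0 : ℝ) 1)
    {a₀ : A} (ha₀ : W ≤ Q a₀) :
    τ * (μ a₀ * (Q a₀ - W) ^ 2) ≤ expectileLoss μ Q τ W := by
  have hterm : τ * (μ a₀ * (Q a₀ - W) ^ 2) =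
      μ a₀ * (|τ - if Q a₀ < W then 1 else 0| * (Q a₀ - W) ^ 2) := by
    rw [if_neg (not_lt.2 ha₀), sub_zero, abs_of_nonneg hτ.1]; ring
  rw [hterm]
  exact single_le_sum (f := fun a => μ a * (|τ - if Q a < W then 1 else 0| * (Q a - W) ^ 2))
    (fun a _ => mul_nonneg (hμ a) (mul_nonneg (abs_nonneg _) (sq_nonneg _))) (mem_univ a₀)

variable (μ Q) in
def IsExpectile (τ v : ℝ) : Prop :=
  ∀ W, expectileLoss μ Q τ v ≤ expectileLoss μ Q τ W

lemma sum_mul_sub_sq_eq_add_sq (hμ : ∑ a, μ a = 1) (W : ℝ) :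
    ∑ a, μ a * (Q a - W) ^ 2 =
      ∑ a, μ a * (Q a - ∑ b, μ b * Q b) ^ 2 + (∑ b, μ b * Q b - W) ^ 2 := by
  set m := ∑ b, μ b * Q b with hm
  have hexpand : ∀ a, μ a * (Q a - W) ^ 2 =
      μ a * (Q a - m) ^ 2 + (2 * (m - W)) * (μ a * Q a) - ((m - W) * (m + W)) * μ a :=
    fun a => by ring
  rw [sum_congr rfl fun a _ => hexpand a, sum_sub_distrib, sum_add_distrib, ← mul_sum,
    ← mul_sum, hμ, ← hm]
  ring

namespace IsExpectile

variable {τ v : ℝ}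

lemma le_sup' [Nonempty A] (hμ : ∀ a, 0 < μ a) (hτ : τ < 1) (hv : IsExpectile μ Q τ v) :
    v ≤ univ.sup' univ_nonempty Q := by
  set M := univ.sup' univ_nonempty Q
  have hQM : ∀ a, Q a ≤ M := fun a => Finset.le_sup' Q (mem_univ a)
  by_contra! hMv
  have hsum : ∑ a, μ a * (Q a - M) ^ 2 < ∑ a, μ a * (Q a - v) ^ 2 :=
    sum_lt_sum_of_nonempty univ_nonempty fun a _ =>
      mul_lt_mul_of_pos_left (by nlinarith [hQM a]) (hμ a)
  have hloss := hv M
  rw [expectileLoss_of_forall_le hτ.le hQM,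
    expectileLoss_of_forall_le hτ.le fun a => (hQM a).trans hMv.le] at hloss
  nlinarith

lemma mono [Nonempty A] (hμ : ∀ a, 0 < μ a) {τ₁ τ₂ v₁ v₂ : ℝ}
    (h₁ : τ₁ ∈ Set.Icc (0 : ℝ) 1) (h₂ : τ₂ ∈ Set.Icc (0 : ℝ) 1) (hτ : τ₁ < τ₂)
    (hv₁ : IsExpectile μ Q τ₁ v₁) (hv₂ : IsExpectile μ Q τ₂ v₂) : v₁ ≤ v₂ := by
  have hloss₁ := hv₁ v₂
  have hloss₂ := hv₂ v₁
  rw [expectileLoss_eq_add_mul h₂ h₁, expectileLoss_eq_add_mul h₂ h₁] at hloss₂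
  have hdev : (τ₂ - τ₁) * signedSqDeviation μ Q v₂ ≤ (τ₂ - τ₁) * signedSqDeviation μ Q v₁ := by
    linarith
  exact (signedSqDeviation_strictAnti hμ).le_iff_ge.1 (le_of_mul_le_mul_left hdev (sub_pos.2 hτ))

lemma eq_mean (hμ : ∑ a, μ a = 1) (hv : IsExpectile μ Q (1 / 2) v) :
    v = ∑ a, μ a * Q a := by
  have hloss := hv (∑ a, μ a * Q a)
  rw [expectileLoss_half, expectileLoss_half, sum_mul_sub_sq_eq_add_sq hμ v,
    sum_mul_sub_sq_eq_add_sq hμ (∑ a, μ a * Q a), sub_self] at hloss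
  nlinarith [sq_nonneg (∑ a, μ a * Q a - v)]

end IsExpectile

lemma tendsto_sup'_of_isExpectile [Nonempty A] (hμ : ∀ a, 0 < μ a) {V : ℝ → ℝ}
    (hV : ∀ τ ∈ Set.Ioo (0 : ℝ) 1, IsExpectile μ Q τ (V τ)) :
    Tendsto V (𝓝[<] 1) (𝓝 (univ.sup' univ_nonempty Q)) := by
  set M := univ.sup' univ_nonempty Q
  obtain ⟨a₀, -, ha₀⟩ := exists_mem_eq_sup' univ_nonempty Q
  set C := ∑ a, μ a * (Q a - M) ^ 2
  have hbound : ∀ τ ∈ Set.Ioo (0 : ℝ) 1, M - V τ ≤ √((1 - τ) * C / (τ * μ a₀)) := by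
    intro τ hτ
    have hVM : V τ ≤ M := (hV τ hτ).le_sup' hμ hτ.2
    refine Real.le_sqrt_of_sq_le ((le_div_iff₀ (mul_pos hτ.1 (hμ a₀))).2 ?_)
    calc (M - V τ) ^ 2 * (τ * μ a₀) = τ * (μ a₀ * (Q a₀ - V τ) ^ 2) := by rw [← ha₀]; ring
      _ ≤ expectileLoss μ Q τ (V τ) :=
        mul_sq_le_expectileLoss (fun a => (hμ a).le) (Set.Ioo_subset_Icc_self hτ) (ha₀ ▸ hVM)
      _ ≤ expectileLoss μ Q τ M := hV τ hτ M
      _ = (1 - τ) * C := expectileLoss_of_forall_le hτ.2.le fun a => Finset.le_sup' Q (mem_univ a)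
  have hlim : Tendsto (fun τ => √((1 - τ) * C / (τ * μ a₀))) (𝓝[<] 1) (𝓝 0) := by
    have hcont : ContinuousAt (fun τ : ℝ => √((1 - τ) * C / (τ * μ a₀))) 1 := by
      fun_prop (disch := simp [(hμ a₀).ne'])
    simpa using hcont.tendsto.mono_left nhdsWithin_le_nhds
  have hIoo : ∀ᶠ τ in 𝓝[<] (1 : ℝ), τ ∈ Set.Ioo (0 : ℝ) 1 := Ioo_mem_nhdsLT one_pos
  have hgap : Tendsto (fun τ => M - V τ) (𝓝[<] 1) (𝓝 0) :=
    tendsto_of_tendsto_of_tendsto_of_le_of_le' tendsto_const_nhds hlim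
      (hIoo.mono fun τ hτ => sub_nonneg.2 ((hV τ hτ).le_sup' hμ hτ.2))
      (hIoo.mono hbound)
  simpa only [sub_sub_cancel, sub_zero] using (tendsto_const_nhds (x := M)).sub hgap

end Expectile

theorem stmt_8 {A : Type*} [Fintype A] [Nonempty A]
    (μ Q : A → ℝ) (hμpos : ∀ a, 0 < μ a) (hμsum : ∑ a, μ a = 1)
    (V : ℝ → ℝ)
    (hV : ∀ τ ∈ Set.Ioo (0 : ℝ) 1, ∀ W : ℝ,
      ∑ a, μ a * (|τ - if Q a < V τ then 1 else 0| * (Q a - V τ) ^ 2) ≤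
      ∑ a, μ a * (|τ - if Q a < W then 1 else 0| * (Q a - W) ^ 2)) :
    Filter.Tendsto V (nhdsWithin 1 (Set.Iio 1)) (nhds (Finset.univ.sup' Finset.univ_nonempty Q)) ∧
    (∀ τ₁ ∈ Set.Ioo (0 : ℝ) 1, ∀ τ₂ ∈ Set.Ioo (0 : ℝ) 1, τ₁ ≤ τ₂ → V τ₁ ≤ V τ₂) ∧
    V (1 / 2) = ∑ a, μ a * Q a := by
  have hexp : ∀ τ ∈ Set.Ioo (0 : ℝ) 1, IsExpectile μ Q τ (V τ) := hV
  refine ⟨tendsto_sup'_of_isExpectile hμpos hexp, fun τ₁ h₁ τ₂ h₂ hle => ?_,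
    (hexp (1 / 2) ⟨by norm_num, by norm_num⟩).eq_mean hμsum⟩
  rcases hle.lt_or_eq with hlt | rfl
  · exact (hexp τ₁ h₁).mono hμpos (Set.Ioo_subset_Icc_self h₁) (Set.Ioo_subset_Icc_self h₂) hlt
      (hexp τ₂ h₂)
  · exact le_rfl
end

section
/- Fix α > 0, a finite action set A, a probability mass function μ with μ(a) > 0, Q : A → ℝ, and let V = (1/α)·log ∑_a μ(a)·exp(α·Q(a)) with Q(a) ≠ V for all a. Define w(a) = α·|exp(α(Q(a) − V)) − 1| / |Q(a) − V| and π(a) = μ(a)·w(a)/Z with Z = ∑_b μ(b)·w(b). Then ∑_a π(a)·Q(a) = V. -/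
/-! The weight is chosen so that `w a * (Q a - V) = f'(Q a - V) = α (exp (α (Q a - V)) - 1)`;
the absolute values cancel because `exp (α u) - 1` has the sign of `u`. Summing against `μ`, the
soft-value normalisation `∑ μ a exp (α (Q a - V)) = ∑ μ a = 1` makes `∑ μ a w a (Q a - V)`
vanish, which says exactly that `V` is the `π`-mean of `Q`. -/

open Finset

namespace Real

lemma sum_mul_exp_mul_sub_logSumExp_eq_one {ι : Type*} [Fintype ι] {α : ℝ} (hα : α ≠ 0)
    (μ Q : ι → ℝ) (hS : 0 < ∑ i, μ i * exp (α * Q i)) :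
    ∑ i, μ i * exp (α * (Q i - 1 / α * log (∑ j, μ j * exp (α * Q j)))) = 1 := by
  have hexp :
      exp (α * (1 / α * log (∑ j, μ j * exp (α * Q j)))) = ∑ j, μ j * exp (α * Q j) := by
    rw [← mul_assoc, mul_one_div_cancel hα, one_mul, exp_log hS]
  simp_rw [mul_sub, exp_sub, hexp, ← mul_div_assoc, ← sum_div]
  exact div_self hS.ne'

lemma exp_mul_sub_one_div_pos {α u : ℝ} (hα : 0 < α) (hu : u ≠ 0) :
    0 < (exp (α * u) - 1) / u := by
  rcases hu.lt_or_gt with hneg | hpos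
  · exact div_pos_of_neg_of_neg
      (sub_neg.2 (exp_lt_one_iff.2 (mul_neg_of_pos_of_neg hα hneg))) hneg
  · exact div_pos (sub_pos.2 (one_lt_exp_iff.2 (mul_pos hα hpos))) hpos

lemma abs_exp_mul_sub_one_div_abs {α u : ℝ} (hα : 0 < α) (hu : u ≠ 0) :
    |exp (α * u) - 1| / |u| = (exp (α * u) - 1) / u := by
  rw [← abs_div, abs_of_pos (exp_mul_sub_one_div_pos hα hu)]

end Real

lemma sum_div_sum_mul_eq_of_sum_mul_sub_eq_zero {ι : Type*} [Fintype ι] (p Q : ι → ℝ)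
    {V : ℝ} (hp : ∑ i, p i ≠ 0) (hbal : ∑ i, p i * (Q i - V) = 0) :
    ∑ i, p i / (∑ j, p j) * Q i = V := by
  simp_rw [mul_sub, sum_sub_distrib, ← sum_mul, sub_eq_zero] at hbal
  simp_rw [div_mul_eq_mul_div, ← sum_div, hbal]
  exact mul_div_cancel_left₀ V hp

theorem stmt_11_general {A : Type*} [Fintype A]
    (α : ℝ) (hα : 0 < α)
    (μ Q : A → ℝ) (hμpos : ∀ a, 0 < μ a) (hμsum : ∑ a, μ a = 1)
    (V : ℝ) (hV : V = (1 / α) * Real.log (∑ a, μ a * Real.exp (α * Q a)))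
    (hQ : ∀ a, Q a ≠ V)
    (w : A → ℝ)
    (hw : ∀ a, w a = α * |Real.exp (α * (Q a - V)) - 1| / |Q a - V|)
    (Z : ℝ) (hZ : Z = ∑ b, μ b * w b)
    (π : A → ℝ) (hπ : ∀ a, π a = μ a * w a / Z) :
    ∑ a, π a * Q a = V := by
  have hA : (univ : Finset A).Nonempty :=
    nonempty_of_sum_ne_zero (hμsum ▸ one_ne_zero)
  have hQV : ∀ a, Q a - V ≠ 0 := fun a => sub_ne_zero.2 (hQ a)
  have hw' : ∀ a, w a = α * ((Real.exp (α * (Q a - V)) - 1) / (Q a - V)) := fun a => by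
    rw [hw a, mul_div_assoc, Real.abs_exp_mul_sub_one_div_abs hα (hQV a)]
  have hnorm : ∑ a, μ a * Real.exp (α * (Q a - V)) = 1 := by
    rw [hV]
    exact Real.sum_mul_exp_mul_sub_logSumExp_eq_one hα.ne' μ Q
      (sum_pos (fun a _ => mul_pos (hμpos a) (Real.exp_pos _)) hA)
  have hZpos : 0 < Z := hZ ▸ sum_pos (fun a _ =>
    mul_pos (hμpos a) (hw' a ▸ mul_pos hα (Real.exp_mul_sub_one_div_pos hα (hQV a)))) hA
  have hbal : ∑ a, μ a * w a * (Q a - V) = 0 := by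
    have hterm : ∀ a,
        μ a * w a * (Q a - V) = α * (μ a * Real.exp (α * (Q a - V))) - α * μ a := by
      intro a
      rw [hw', mul_assoc, mul_assoc, div_mul_cancel₀ _ (hQV a)]
      ring
    simp_rw [hterm, sum_sub_distrib, ← mul_sum, hnorm, hμsum, sub_self]
  simp_rw [hπ, hZ]
  exact sum_div_sum_mul_eq_of_sum_mul_sub_eq_zero _ Q (hZ ▸ hZpos.ne') hbal

theorem stmt_11 {A : Type*} [Fintype A] [Nonempty A]
    (α : ℝ) (hα : 0 < α)
    (μ Q : A → ℝ) (hμpos : ∀ a, 0 < μ a) (hμsum : ∑ a, μ a = 1)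
    (V : ℝ) (hV : V = (1 / α) * Real.log (∑ a, μ a * Real.exp (α * Q a)))
    (hQ : ∀ a, Q a ≠ V)
    (w : A → ℝ)
    (hw : ∀ a, w a = α * |Real.exp (α * (Q a - V)) - 1| / |Q a - V|)
    (Z : ℝ) (hZ : Z = ∑ b, μ b * w b)
    (π : A → ℝ) (hπ : ∀ a, π a = μ a * w a / Z) :
    ∑ a, π a * Q a = V :=
  stmt_11_general α hα μ Q hμpos hμsum V hV hQ w hw Z hZ π hπ
end

section
/- Fix a finite action set A, a probability mass function μ with μ(a) > 0 for all a, Q : A → ℝ, and 1/2 < τ₁ ≤ τ₂ < 1. Let π_{τᵢ}(a) ∝ μ(a)·|τᵢ − 𝟙(Q(a) < V_{τᵢ})| be the expectile implicit policies where V_{τᵢ} is the τᵢ-expectile of Q under μ. Then ∑_a π_{τ₂}(a)·Q(a) ≥ ∑_a π_{τ₁}(a)·Q(a). -/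
/-!
The expectile loss is differentiable (the asymmetric square `|τ - 𝟙(q < v)| * (q - v) ^ 2` is flat to
second order at its kink), so a minimiser `V` satisfies the first-order condition
`∑ μ a * |τ - 𝟙(Q a < V)| * (Q a - V) = 0`, which says exactly that the implicit policy has mean `V`.
The left-hand side of this condition is nondecreasing in `τ` and strictly decreasing in `V`, hence
the expectile, and with it the policy mean, is nondecreasing in `τ`.
-/

open Filter Finset Topology

noncomputable section

lemma Finset.sum_div_sum_mul_eq_of_sum_mul_sub_eq_zero {ι : Type*} {s : Finset ι} {c f : ι → ℝ}
    {v : ℝ} (hc : ∑ i ∈ s, c i ≠ 0) (h : ∑ i ∈ s, c i * (f i - v) = 0) :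
    ∑ i ∈ s, c i / (∑ j ∈ s, c j) * f i = v := by
  simp only [mul_sub, sum_sub_distrib, ← sum_mul] at h
  simp only [div_mul_eq_mul_div, ← sum_div]
  rw [div_eq_iff hc]
  linarith

namespace Expectile

def weight (τ q v : ℝ) : ℝ := |τ - if q < v then 1 else 0|

def loss {A : Type*} [Fintype A] (μ Q : A → ℝ) (τ v : ℝ) : ℝ :=
  ∑ a, μ a * (weight τ (Q a) v * (Q a - v) ^ 2)

def policy {A : Type*} [Fintype A] (μ Q : A → ℝ) (τ v : ℝ) (a : A) : ℝ :=
  μ a * weight τ (Q a) v / ∑ b, μ b * weight τ (Q b) v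

def score {A : Type*} [Fintype A] (μ Q : A → ℝ) (τ v : ℝ) : ℝ :=
  ∑ a, μ a * weight τ (Q a) v * (Q a - v)

section Weight

variable {τ q v : ℝ}

lemma weight_of_lt (hτ : τ ≤ 1) (h : q < v) : weight τ q v = 1 - τ := by
  rw [weight, if_pos h, abs_of_nonpos (by linarith)]
  ring

lemma weight_of_le (hτ : 0 ≤ τ) (h : v ≤ q) : weight τ q v = τ := by
  rw [weight, if_neg h.not_gt, sub_zero, abs_of_nonneg hτ]

lemma weight_pos (hτ₀ : 0 < τ) (hτ₁ : τ < 1) : 0 < weight τ q v := by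
  rcases lt_or_ge q v with h | h
  · rw [weight_of_lt hτ₁.le h]; linarith
  · rwa [weight_of_le hτ₀.le h]

lemma weight_le_abs_add_one (τ q v : ℝ) : weight τ q v ≤ |τ| + 1 := by
  refine (abs_sub _ _).trans ?_
  gcongr
  split_ifs <;> norm_num

end Weight

lemma hasDerivAt_weight_mul_sq (τ q v : ℝ) :
    HasDerivAt (fun w => weight τ q w * (q - w) ^ 2) (-2 * weight τ q v * (q - v)) v := by
  rcases eq_or_ne q v with rfl | hne
  · rw [sub_self, mul_zero]
    have hbound : (fun w => weight τ q w * (q - w) ^ 2) =O[𝓝 q] fun w => ‖w - q‖ ^ 2 := by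
      refine Asymptotics.IsBigO.of_bound (|τ| + 1) (Eventually.of_forall fun w => ?_)
      rw [norm_mul, norm_pow, norm_pow, norm_norm, Real.norm_of_nonneg (by simp [weight]),
        norm_sub_rev]
      exact mul_le_mul_of_nonneg_right (weight_le_abs_add_one τ q w) (by positivity)
    simpa using (hbound.hasFDerivAt one_lt_two).hasDerivAt
  · have hconst : ∀ᶠ w in 𝓝 v, weight τ q w = weight τ q v := by
      rcases hne.lt_or_gt with h | h
      · filter_upwards [Ioi_mem_nhds h] with w hw
        rw [weight, weight, if_pos (show q < w from hw), if_pos h]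
      · filter_upwards [Iio_mem_nhds h] with w hw
        rw [weight, weight, if_neg (not_lt.mpr hw.le), if_neg (not_lt.mpr h.le)]
    have hsq : HasDerivAt (fun w => weight τ q v * (q - w) ^ 2)
        (-2 * weight τ q v * (q - v)) v :=
      ((((hasDerivAt_id' v).const_sub q).fun_pow 2).const_mul (weight τ q v)).congr_deriv
        (by ring)
    exact hsq.congr_of_eventuallyEq (hconst.mono fun w hw => by simp only [hw])

variable {A : Type*} [Fintype A] {μ Q : A → ℝ}

lemma hasDerivAt_loss (τ v : ℝ) :
    HasDerivAt (loss μ Q τ) (-2 * score μ Q τ v) v := by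
  have h := HasDerivAt.fun_sum (u := univ) fun a _ =>
    (hasDerivAt_weight_mul_sq τ (Q a) v).const_mul (μ a)
  refine h.congr_deriv ?_
  rw [score, mul_sum]
  exact sum_congr rfl fun a _ => by ring

lemma score_eq_zero_of_isLocalMin {τ v : ℝ} (hv : IsLocalMin (loss μ Q τ) v) :
    score μ Q τ v = 0 := by
  have h := hv.hasDerivAt_eq_zero (hasDerivAt_loss τ v)
  linarith

lemma score_mono_tau (hμ : ∀ a, 0 ≤ μ a) {τ₁ τ₂ : ℝ} (h₀ : 0 ≤ τ₁) (h : τ₁ ≤ τ₂)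
    (h₁ : τ₂ ≤ 1) (v : ℝ) : score μ Q τ₁ v ≤ score μ Q τ₂ v := by
  refine sum_le_sum fun a _ => ?_
  rw [mul_assoc, mul_assoc]
  refine mul_le_mul_of_nonneg_left ?_ (hμ a)
  rcases lt_or_ge (Q a) v with hq | hq
  · rw [weight_of_lt (h.trans h₁) hq, weight_of_lt h₁ hq]
    nlinarith
  · rw [weight_of_le h₀ hq, weight_of_le (h₀.trans h) hq]
    nlinarith

lemma weight_mul_sub_strictAnti {τ : ℝ} (hτ₀ : 0 < τ) (hτ₁ : τ < 1) (q : ℝ) :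
    StrictAnti fun v => weight τ q v * (q - v) := by
  intro v v' hv
  dsimp only
  rcases lt_or_ge q v with hq | hq
  · rw [weight_of_lt hτ₁.le hq, weight_of_lt hτ₁.le (hq.trans hv)]
    nlinarith
  rw [weight_of_le hτ₀.le hq]
  rcases lt_or_ge q v' with hq' | hq'
  · rw [weight_of_lt hτ₁.le hq']
    nlinarith
  · rw [weight_of_le hτ₀.le hq']
    nlinarith

lemma score_strictAnti [Nonempty A] (hμ : ∀ a, 0 < μ a) {τ : ℝ} (hτ₀ : 0 < τ) (hτ₁ : τ < 1) :
    StrictAnti (score μ Q τ) := by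
  intro v v' hv
  refine sum_lt_sum_of_nonempty univ_nonempty fun a _ => ?_
  rw [mul_assoc, mul_assoc]
  exact mul_lt_mul_of_pos_left (weight_mul_sub_strictAnti hτ₀ hτ₁ (Q a) hv) (hμ a)

lemma le_of_score_eq_zero [Nonempty A] (hμ : ∀ a, 0 < μ a) {τ₁ τ₂ V₁ V₂ : ℝ} (h₀ : 0 < τ₁)
    (h : τ₁ ≤ τ₂) (h₁ : τ₂ < 1) (hV₁ : score μ Q τ₁ V₁ = 0) (hV₂ : score μ Q τ₂ V₂ = 0) :
    V₁ ≤ V₂ := by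
  refine (score_strictAnti (Q := Q) hμ (h₀.trans_le h) h₁).le_iff_ge.mp ?_
  calc score μ Q τ₂ V₂ = score μ Q τ₁ V₁ := hV₂.trans hV₁.symm
    _ ≤ score μ Q τ₂ V₁ := score_mono_tau (fun a => (hμ a).le) h₀.le h h₁.le V₁

lemma sum_policy_mul_eq_of_score_eq_zero [Nonempty A] (hμ : ∀ a, 0 < μ a) {τ v : ℝ}
    (hτ₀ : 0 < τ) (hτ₁ : τ < 1) (hv : score μ Q τ v = 0) :
    ∑ a, policy μ Q τ v a * Q a = v :=
  sum_div_sum_mul_eq_of_sum_mul_sub_eq_zero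
    (sum_pos (fun a _ => mul_pos (hμ a) (weight_pos hτ₀ hτ₁)) univ_nonempty).ne' hv

end Expectile

end

open Expectile

theorem stmt_17_general {A : Type*} [Fintype A] [Nonempty A]
    (μ Q : A → ℝ) (hμpos : ∀ a, 0 < μ a)
    (τ₁ τ₂ : ℝ) (h₁ : 1 / 2 < τ₁) (h₂ : τ₁ ≤ τ₂) (h₃ : τ₂ < 1)
    (V₁ V₂ : ℝ)
    (hV₁ : ∀ W : ℝ,
      ∑ a, μ a * (|τ₁ - if Q a < V₁ then 1 else 0| * (Q a - V₁) ^ 2) ≤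
      ∑ a, μ a * (|τ₁ - if Q a < W then 1 else 0| * (Q a - W) ^ 2))
    (hV₂ : ∀ W : ℝ,
      ∑ a, μ a * (|τ₂ - if Q a < V₂ then 1 else 0| * (Q a - V₂) ^ 2) ≤
      ∑ a, μ a * (|τ₂ - if Q a < W then 1 else 0| * (Q a - W) ^ 2))
    (Z₁ Z₂ : ℝ)
    (hZ₁ : Z₁ = ∑ a, μ a * |τ₁ - if Q a < V₁ then 1 else 0|)
    (hZ₂ : Z₂ = ∑ a, μ a * |τ₂ - if Q a < V₂ then 1 else 0|)
    (π₁ π₂ : A → ℝ)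
    (hπ₁ : ∀ a, π₁ a = μ a * |τ₁ - if Q a < V₁ then 1 else 0| / Z₁)
    (hπ₂ : ∀ a, π₂ a = μ a * |τ₂ - if Q a < V₂ then 1 else 0| / Z₂) :
    ∑ a, π₁ a * Q a ≤ ∑ a, π₂ a * Q a := by
  have hτ₁ : 0 < τ₁ := by linarith
  have hπ₁ : π₁ = policy μ Q τ₁ V₁ := funext fun a => by rw [hπ₁, hZ₁]; rfl
  have hπ₂ : π₂ = policy μ Q τ₂ V₂ := funext fun a => by rw [hπ₂, hZ₂]; rfl
  have hscore₁ : score μ Q τ₁ V₁ = 0 := score_eq_zero_of_isLocalMin (Eventually.of_forall hV₁)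
  have hscore₂ : score μ Q τ₂ V₂ = 0 := score_eq_zero_of_isLocalMin (Eventually.of_forall hV₂)
  rw [hπ₁, hπ₂, sum_policy_mul_eq_of_score_eq_zero hμpos hτ₁ (h₂.trans_lt h₃) hscore₁,
    sum_policy_mul_eq_of_score_eq_zero hμpos (hτ₁.trans_le h₂) h₃ hscore₂]
  exact le_of_score_eq_zero hμpos hτ₁ h₂ h₃ hscore₁ hscore₂

theorem stmt_17 {A : Type*} [Fintype A] [Nonempty A]
    (μ Q : A → ℝ) (hμpos : ∀ a, 0 < μ a) (hμsum : ∑ a, μ a = 1)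
    (τ₁ τ₂ : ℝ) (h₁ : 1 / 2 < τ₁) (h₂ : τ₁ ≤ τ₂) (h₃ : τ₂ < 1)
    (V₁ V₂ : ℝ)
    (hV₁ : ∀ W : ℝ,
      ∑ a, μ a * (|τ₁ - if Q a < V₁ then 1 else 0| * (Q a - V₁) ^ 2) ≤
      ∑ a, μ a * (|τ₁ - if Q a < W then 1 else 0| * (Q a - W) ^ 2))
    (hV₂ : ∀ W : ℝ,
      ∑ a, μ a * (|τ₂ - if Q a < V₂ then 1 else 0| * (Q a - V₂) ^ 2) ≤
      ∑ a, μ a * (|τ₂ - if Q a < W then 1 else 0| * (Q a - W) ^ 2))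
    (Z₁ Z₂ : ℝ)
    (hZ₁ : Z₁ = ∑ a, μ a * |τ₁ - if Q a < V₁ then 1 else 0|)
    (hZ₂ : Z₂ = ∑ a, μ a * |τ₂ - if Q a < V₂ then 1 else 0|)
    (π₁ π₂ : A → ℝ)
    (hπ₁ : ∀ a, π₁ a = μ a * |τ₁ - if Q a < V₁ then 1 else 0| / Z₁)
    (hπ₂ : ∀ a, π₂ a = μ a * |τ₂ - if Q a < V₂ then 1 else 0| / Z₂) :
    ∑ a, π₁ a * Q a ≤ ∑ a, π₂ a * Q a :=
  stmt_17_general μ Q hμpos τ₁ τ₂ h₁ h₂ h₃ V₁ V₂ hV₁ hV₂ Z₁ Z₂ hZ₁ hZ₂ π₁ π₂ hπ₁ hπ₂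
end
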